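/- arXiv:2504.21637 — 4 statements merged into one kernel-verified Lean document; each statement's English description precedes it below -/
import Mathlib

section
/- Let ω be a nonempty bounded open subset of ℝ² and let s : closure(ω) → ℝ be continuous with s(y) > 0 for every y ∈ closure(ω); set m := min over closure(ω) of s, so m > 0. Let η ∈ L²(ω) satisfy η + s ≥ 0 almost everywhere in ω. For each integer k ≥ 1 define f^{(k)}(y) := 0 if dist(y, ∂ω) < 1/k, f^{(k)}(y) := k·dist(y, ∂ω) − 1 if 1/k ≤ dist(y, ∂ω) < 2/k, and f^{(k)}(y) := 1 if dist(y, ∂ω) ≥ 2/k, and set η^{(k)} := (1 − 1/k)·f^{(k)}·η. Then: (a) η^{(k)} → η in L²(ω) as k → ∞; (b) for each k, η^{(k)}(y) = 0 for almost every y ∈ ω with dist(y, ∂ω) < 1/k; and (c) for each k, η^{(k)}(y) + s(y) ≥ m/k for almost every y ∈ ω. -/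
open MeasureTheory Metric Set Filter

noncomputable section

/-- The cut-off function `f^{(k)}` built from the distance to the boundary of `ω`. -/
def fcut (ω : Set (EuclideanSpace ℝ (Fin 2))) (k : ℕ) (y : EuclideanSpace ℝ (Fin 2)) : ℝ :=
  if Metric.infDist y (frontier ω) < 1 / k then 0
  else if Metric.infDist y (frontier ω) < 2 / k then k * Metric.infDist y (frontier ω) - 1
  else 1

/-! A nonempty bounded `ω` has nonempty frontier (the distance to `∅` would be the junk value
`0`), so points of `ω` lie at positive distance from it and the cut-off is eventually `1` there:
`η^{(k)} → η` pointwise on `ω`. Since `0 ≤ (1 - 1/k) f^{(k)} ≤ 1`, the errors are dominated by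
`|η|` and dominated convergence gives (a). For (c), with `c := (1 - 1/k) f^{(k)}(y) ≤ 1 - 1/k`,
`η^{(k)} + s = c (η + s) + (1 - c) s ≥ s / k ≥ m / k`. -/

section DominatedConvergence

variable {α E F : Type*} [MeasurableSpace α] [NormedAddCommGroup E] [NormedAddCommGroup F]
  {μ : Measure α} {p : ENNReal}

theorem tendsto_eLpNorm_zero_of_dominated (hp : p ≠ ⊤) {f : ℕ → α → E} {g : α → F}
    (hf : ∀ n, AEStronglyMeasurable (f n) μ) (hg : MemLp g p μ)
    (hbound : ∀ n, ∀ᵐ x ∂μ, ‖f n x‖ ≤ ‖g x‖)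
    (hlim : ∀ᵐ x ∂μ, Tendsto (fun n => f n x) atTop (nhds 0)) :
    Tendsto (fun n => eLpNorm (f n) p μ) atTop (nhds 0) := by
  rcases eq_or_ne p 0 with rfl | hp0
  · simp
  have hp_pos : 0 < p.toReal := ENNReal.toReal_pos hp0 hp
  have hint : Tendsto (fun n => ∫⁻ x, ‖f n x‖ₑ ^ p.toReal ∂μ) atTop (nhds 0) := by
    simpa using tendsto_lintegral_of_dominated_convergence' (f := 0)
      (fun x => ‖g x‖ₑ ^ p.toReal)
      (fun n => (hf n).enorm.pow_const _)
      (fun n => (hbound n).mono fun x hx =>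
        ENNReal.rpow_le_rpow (enorm_le_iff_norm_le.2 hx) hp_pos.le)
      (lintegral_rpow_enorm_lt_top_of_eLpNorm_lt_top hp0 hp hg.2).ne
      (hlim.mono fun x hx => by
        have hnorm : Tendsto (fun n => ‖f n x‖ₑ) atTop (nhds 0) := by
          simpa using hx.enorm
        simpa [Function.comp_def, hp_pos] using
          ((ENNReal.continuous_rpow_const (y := p.toReal)).tendsto 0).comp hnorm)
  simp_rw [eLpNorm_eq_lintegral_rpow_enorm_toReal hp0 hp]
  simpa [Function.comp_def, hp_pos] using
    ((ENNReal.continuous_rpow_const (y := 1 / p.toReal)).tendsto 0).comp hint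

theorem tendsto_eLpNorm_mul_sub_self (hp : p ≠ ⊤) {c : ℕ → α → ℝ} {f : α → ℝ}
    (hc : ∀ n, AEStronglyMeasurable (c n) μ) (hc01 : ∀ n, ∀ᵐ x ∂μ, c n x ∈ Icc 0 1)
    (hlim : ∀ᵐ x ∂μ, Tendsto (fun n => c n x) atTop (nhds 1)) (hf : MemLp f p μ) :
    Tendsto (fun n => eLpNorm (fun x => c n x * f x - f x) p μ) atTop (nhds 0) := by
  refine tendsto_eLpNorm_zero_of_dominated hp (fun n => ((hc n).mul hf.1).sub hf.1) hf
    (fun n => ?_) ?_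
  · filter_upwards [hc01 n] with x ⟨hc0, hc1⟩
    have hcoef : ‖c n x - 1‖ ≤ 1 := by
      rw [Real.norm_eq_abs, abs_le]
      constructor <;> linarith
    rw [← sub_one_mul, norm_mul]
    exact mul_le_of_le_one_left (norm_nonneg _) hcoef
  · filter_upwards [hlim] with x hx
    simpa using (hx.mul_const (f x)).sub_const (f x)

end DominatedConvergence

theorem IsOpen.infDist_frontier_pos {X : Type*} [PseudoMetricSpace X] {U : Set X}
    (hU : IsOpen U) (hfr : (frontier U).Nonempty) {y : X} (hy : y ∈ U) :
    0 < infDist y (frontier U) :=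
  (isClosed_frontier.notMem_iff_infDist_pos hfr).1 fun hy' =>
    (hU.inter_frontier_eq.subset ⟨hy, hy'⟩).elim

section Cutoff

variable (ω : Set (EuclideanSpace ℝ (Fin 2)))

theorem one_sub_one_div_natCast_mem_Icc (k : ℕ) : 1 - 1 / (k : ℝ) ∈ Icc 0 1 := by
  rcases k.eq_zero_or_pos with rfl | hk
  · simp
  · exact ⟨sub_nonneg.2 (div_le_one_of_le₀ (by exact_mod_cast hk) k.cast_nonneg),
      sub_le_self _ (by positivity)⟩

theorem fcut_mem_Icc (k : ℕ) (y : EuclideanSpace ℝ (Fin 2)) : fcut ω k y ∈ Icc 0 1 := by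
  unfold fcut
  split_ifs with h₁ h₂
  · simp
  · rcases k.eq_zero_or_pos with rfl | hk
    · exact absurd h₂ (by simpa using infDist_nonneg)
    · have hk' : (0 : ℝ) < k := by exact_mod_cast hk
      rw [not_lt, div_le_iff₀' hk'] at h₁
      rw [lt_div_iff₀' hk'] at h₂
      constructor <;> linarith
  · simp

theorem measurable_fcut (k : ℕ) : Measurable (fcut ω k) := by
  have hd : Measurable fun y : EuclideanSpace ℝ (Fin 2) => infDist y (frontier ω) :=
    (continuous_infDist_pt _).measurable
  exact Measurable.ite (measurableSet_lt hd measurable_const) measurable_const <|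
    Measurable.ite (measurableSet_lt hd measurable_const) ((hd.const_mul _).sub measurable_const)
      measurable_const

theorem fcut_eq_zero {k : ℕ} {y : EuclideanSpace ℝ (Fin 2)}
    (hy : infDist y (frontier ω) < 1 / k) : fcut ω k y = 0 :=
  if_pos hy

theorem fcut_eq_one {k : ℕ} {y : EuclideanSpace ℝ (Fin 2)}
    (hy : 2 / (k : ℝ) ≤ infDist y (frontier ω)) : fcut ω k y = 1 := by
  have h12 : 1 / (k : ℝ) ≤ 2 / k := div_le_div_of_nonneg_right one_le_two k.cast_nonneg
  rw [fcut, if_neg (h12.trans hy).not_gt, if_neg hy.not_gt]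

theorem mul_fcut_mem_Icc (k : ℕ) (y : EuclideanSpace ℝ (Fin 2)) :
    (1 - 1 / (k : ℝ)) * fcut ω k y ∈ Icc 0 (1 - 1 / (k : ℝ)) := by
  obtain ⟨hf0, hf1⟩ := fcut_mem_Icc ω k y
  have hk0 := (one_sub_one_div_natCast_mem_Icc k).1
  exact ⟨mul_nonneg hk0 hf0, mul_le_of_le_one_right hk0 hf1⟩

theorem tendsto_mul_fcut {y : EuclideanSpace ℝ (Fin 2)} (hy : 0 < infDist y (frontier ω)) :
    Tendsto (fun k : ℕ => (1 - 1 / (k : ℝ)) * fcut ω k y) atTop (nhds 1) := by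
  have hcut : ∀ᶠ k : ℕ in atTop, fcut ω k y = 1 :=
    ((tendsto_const_div_atTop_nhds_zero_nat 2).eventually_le_const hy).mono
      fun k hk => fcut_eq_one ω hk
  have hlim : Tendsto (fun k : ℕ => (1 - 1 / (k : ℝ)) * 1) atTop (nhds ((1 - 0) * 1)) :=
    (tendsto_const_nhds.sub tendsto_one_div_atTop_nhds_zero_nat).mul_const 1
  rw [sub_zero, one_mul] at hlim
  exact hlim.congr' (hcut.mono fun k hk => by simp only [hk])

theorem div_le_mul_fcut_mul_add (k : ℕ) {a s m : ℝ} (hm : 0 ≤ m) (hms : m ≤ s)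
    (has : 0 ≤ a + s) (y : EuclideanSpace ℝ (Fin 2)) :
    m / k ≤ (1 - 1 / (k : ℝ)) * fcut ω k y * a + s := by
  obtain ⟨hc0, hc1⟩ := mul_fcut_mem_Icc ω k y
  set c := (1 - 1 / (k : ℝ)) * fcut ω k y
  have hk : 0 ≤ 1 / (k : ℝ) := by positivity
  calc m / k = 1 / k * m := by ring
    _ ≤ (1 - c) * s := mul_le_mul (by linarith) hms hm (by linarith)
    _ ≤ c * (a + s) + (1 - c) * s := le_add_of_nonneg_left (mul_nonneg hc0 has)
    _ = c * a + s := by ring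

end Cutoff

theorem stmt2_general (ω : Set (EuclideanSpace ℝ (Fin 2))) (hωopen : IsOpen ω)
    (hωbdd : Bornology.IsBounded ω) (hωne : ω.Nonempty)
    (s : EuclideanSpace ℝ (Fin 2) → ℝ)
    (hspos : ∀ y ∈ closure ω, 0 < s y)
    (m : ℝ) (hm : IsLeast (s '' closure ω) m)
    (η : EuclideanSpace ℝ (Fin 2) → ℝ)
    (hη : MemLp η 2 (volume.restrict ω))
    (hcon : ∀ᵐ y ∂(volume.restrict ω), 0 ≤ η y + s y) :
    0 < m ∧
    Tendsto (fun k : ℕ =>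
        eLpNorm (fun y => (1 - 1 / (k : ℝ)) * fcut ω k y * η y - η y) 2 (volume.restrict ω))
      atTop (nhds 0) ∧
    (∀ k : ℕ, 1 ≤ k → ∀ᵐ y ∂(volume.restrict ω),
      Metric.infDist y (frontier ω) < 1 / k → (1 - 1 / (k : ℝ)) * fcut ω k y * η y = 0) ∧
    (∀ k : ℕ, 1 ≤ k → ∀ᵐ y ∂(volume.restrict ω),
      m / k ≤ (1 - 1 / (k : ℝ)) * fcut ω k y * η y + s y) := by
  have hm0 : 0 < m := by
    obtain ⟨y, hy, rfl⟩ := hm.1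
    exact hspos y hy
  have hfr : (frontier ω).Nonempty :=
    nonempty_frontier_iff.2 ⟨hωne, fun h => NormedSpace.unbounded_univ ℝ _ (h ▸ hωbdd)⟩
  refine ⟨hm0, ?_, fun k _ => ae_of_all _ fun y hy => by rw [fcut_eq_zero ω hy, mul_zero, zero_mul],
    fun k _ => ?_⟩
  · refine tendsto_eLpNorm_mul_sub_self ENNReal.ofNat_ne_top
      (fun k => ((measurable_fcut ω k).const_mul _).aestronglyMeasurable)
      (fun k => ae_of_all _ fun y => Icc_subset_Icc_right
        (one_sub_one_div_natCast_mem_Icc k).2 (mul_fcut_mem_Icc ω k y)) ?_ hη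
    filter_upwards [ae_restrict_mem hωopen.measurableSet] with y hy
    exact tendsto_mul_fcut ω (hωopen.infDist_frontier_pos hfr hy)
  · filter_upwards [hcon, ae_restrict_mem hωopen.measurableSet] with y hy hyω
    exact div_le_mul_fcut_mul_add ω k hm0.le (hm.2 ⟨y, subset_closure hyω, rfl⟩) hy y

/-- **Step (i) of the density lemma.** With `η^{(k)} := (1 - 1/k) · f^{(k)} · η`:
(a) `η^{(k)} → η` in `L²(ω)`; (b) `η^{(k)}` vanishes a.e. within distance `1/k` of the
boundary; (c) `η^{(k)} + s ≥ m/k` a.e. in `ω`, where `m = min_{closure ω} s > 0`. -/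
theorem stmt2 (ω : Set (EuclideanSpace ℝ (Fin 2))) (hωopen : IsOpen ω)
    (hωbdd : Bornology.IsBounded ω) (hωne : ω.Nonempty)
    (s : EuclideanSpace ℝ (Fin 2) → ℝ) (hscont : ContinuousOn s (closure ω))
    (hspos : ∀ y ∈ closure ω, 0 < s y)
    (m : ℝ) (hm : IsLeast (s '' closure ω) m)
    (η : EuclideanSpace ℝ (Fin 2) → ℝ)
    (hη : MemLp η 2 (volume.restrict ω))
    (hcon : ∀ᵐ y ∂(volume.restrict ω), 0 ≤ η y + s y) :
    0 < m ∧
    Tendsto (fun k : ℕ =>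
        eLpNorm (fun y => (1 - 1 / (k : ℝ)) * fcut ω k y * η y - η y) 2 (volume.restrict ω))
      atTop (nhds 0) ∧
    (∀ k : ℕ, 1 ≤ k → ∀ᵐ y ∂(volume.restrict ω),
      Metric.infDist y (frontier ω) < 1 / k → (1 - 1 / (k : ℝ)) * fcut ω k y * η y = 0) ∧
    (∀ k : ℕ, 1 ≤ k → ∀ᵐ y ∂(volume.restrict ω),
      m / k ≤ (1 - 1 / (k : ℝ)) * fcut ω k y * η y + s y) :=
  stmt2_general ω hωopen hωbdd hωne s hspos m hm η hη hcon
end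
end

section
/- Let ω, ω0, ω1 be bounded open subsets of ℝ² with ω1 nonempty, closure(ω1) ⊂ ω0 and closure(ω0) ⊂ ω, and set d := (1/2)·min{dist(∂ω1, ∂ω0), dist(∂ω0, ∂ω)} (which is strictly positive). Fix ρ ∈ {1, 2}. Let s̃ : ω → ℝ be continuous and concave along every segment parallel to e_ρ contained in ω0 (this holds in particular if s̃ is concave on ω0). Let η3 ∈ L²(ω) satisfy s̃(y) + η3(y) ≥ 0 for almost every y ∈ ω. Let φ1 : ℝ² → ℝ be a C^∞ function with compact support contained in ω1 and with 0 ≤ φ1 ≤ 1. Then for every h with 0 < h < d and every ϱ with 0 < ϱ < h²/2, the function η_{ϱ,3} := η3 + ϱ·φ1·δ_{ρh}η3 satisfies s̃(y) + η_{ϱ,3}(y) ≥ 0 for almost every y ∈ ω1. -/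
open MeasureTheory Metric Set

noncomputable section

/-- The distance between two subsets of `ℝ²`. -/
def setDist (A B : Set (EuclideanSpace ℝ (Fin 2))) : ℝ :=
  sInf (Set.image2 dist A B)

/-- A preconnected set meeting an open set and its complement meets the frontier. -/
lemma aux_frontier_cross {X : Type*} [TopologicalSpace X] {u t : Set X}
    (hu : IsOpen u) (ht : IsPreconnected t) (h1 : (t ∩ u).Nonempty)
    (h2 : (t \ u).Nonempty) : (t ∩ frontier u).Nonempty := by
  by_contra hc
  rw [Set.not_nonempty_iff_eq_empty] at hc
  have hdisj : Disjoint (frontier u) t := by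
    rw [Set.disjoint_iff_inter_eq_empty, Set.inter_comm]; exact hc
  haveI : PreconnectedSpace t := Subtype.preconnectedSpace ht
  have hclopen : IsClopen (Subtype.val ⁻¹' u : Set t) := isClopen_preimage_val hu hdisj
  obtain ⟨x, hxt, hxu⟩ := h1
  have huniv : (Subtype.val ⁻¹' u : Set t) = Set.univ :=
    hclopen.eq_univ ⟨⟨x, hxt⟩, hxu⟩
  obtain ⟨z, hzt, hzu⟩ := h2
  have : (⟨z, hzt⟩ : t) ∈ (Subtype.val ⁻¹' u : Set t) := huniv ▸ Set.mem_univ _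
  exact hzu this

/-- **Lemma 7.1.** Let `ω1 ⊂⊂ ω0 ⊂⊂ ω` and let `s̃` be continuous on `ω` and concave along
every segment parallel to `e_ρ` contained in `ω0`. If `η3 ∈ L²(ω)` satisfies
`s̃ + η3 ≥ 0` a.e. in `ω`, `φ1 ∈ C_c^∞(ω1)` with `0 ≤ φ1 ≤ 1`, then for every `0 < h < d`
and `0 < ϱ < h²/2` the perturbed function `η3 + ϱ·φ1·δ_{ρh}η3` still satisfies
`s̃ + η_{ϱ,3} ≥ 0` a.e. in `ω1`. -/
theorem stmt6 (ω ω0 ω1 : Set (EuclideanSpace ℝ (Fin 2)))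
    (hωopen : IsOpen ω) (hω0open : IsOpen ω0) (hω1open : IsOpen ω1)
    (hωbdd : Bornology.IsBounded ω) (hω0bdd : Bornology.IsBounded ω0)
    (hω1bdd : Bornology.IsBounded ω1)
    (hω1ne : ω1.Nonempty) (h10 : closure ω1 ⊆ ω0) (h0ω : closure ω0 ⊆ ω)
    (d : ℝ)
    (hd : d = (1 / 2) * min (setDist (frontier ω1) (frontier ω0))
      (setDist (frontier ω0) (frontier ω)))
    (ρ : Fin 2)
    (stil : EuclideanSpace ℝ (Fin 2) → ℝ) (hscont : ContinuousOn stil ω)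
    (hconc : ∀ (y : EuclideanSpace ℝ (Fin 2)) (t1 t2 : ℝ),
      (∀ t ∈ Set.Icc t1 t2, y + t • EuclideanSpace.single ρ (1 : ℝ) ∈ ω0) →
      ConcaveOn ℝ (Set.Icc t1 t2) (fun t => stil (y + t • EuclideanSpace.single ρ (1 : ℝ))))
    (η3 : EuclideanSpace ℝ (Fin 2) → ℝ) (hη3 : MemLp η3 2 (volume.restrict ω))
    (hcon : ∀ᵐ y ∂(volume.restrict ω), 0 ≤ stil y + η3 y)
    (φ1 : EuclideanSpace ℝ (Fin 2) → ℝ) (hφsm : ContDiff ℝ (⊤ : ℕ∞) φ1)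
    (hφc : HasCompactSupport φ1) (hφsupp : tsupport φ1 ⊆ ω1)
    (hφ0 : ∀ y, 0 ≤ φ1 y) (hφ1 : ∀ y, φ1 y ≤ 1)
    (h ϱ : ℝ) (hh0 : 0 < h) (hhd : h < d) (hϱ0 : 0 < ϱ) (hϱh : ϱ < h ^ 2 / 2) :
    ∀ᵐ y ∂(volume.restrict ω1),
      0 ≤ stil y + (η3 y + ϱ * φ1 y *
        ((η3 (y + h • EuclideanSpace.single ρ (1 : ℝ)) - 2 * η3 y +
          η3 (y - h • EuclideanSpace.single ρ (1 : ℝ))) / h ^ 2)) := by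
  set e : EuclideanSpace ℝ (Fin 2) := EuclideanSpace.single ρ (1 : ℝ) with he
  have hω1sub0 : ω1 ⊆ ω0 := fun x hx => h10 (subset_closure hx)
  have hω0subω : ω0 ⊆ ω := fun x hx => h0ω (subset_closure hx)
  -- Geometry: if `y ∈ ω1` and `|t| ≤ h` then `y + t • e ∈ ω0`.
  have hgeo : ∀ y ∈ ω1, ∀ t : ℝ, |t| ≤ h → y + t • e ∈ ω0 := by
    intro y hy t ht
    have hdle : ∀ z ∈ ω0ᶜ, d ≤ dist y z := by
      intro z hz
      -- segment from y to z crosses both frontiers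
      have hseg : IsPreconnected (segment ℝ y z) := (convex_segment y z).isPreconnected
      have hyz : y ∈ segment ℝ y z := left_mem_segment ℝ y z
      have hzz : z ∈ segment ℝ y z := right_mem_segment ℝ y z
      obtain ⟨w, hwseg, hwfr⟩ :=
        aux_frontier_cross hω1open hseg ⟨y, hyz, hy⟩
          ⟨z, hzz, fun hz1 => hz (hω1sub0 hz1)⟩
      obtain ⟨w', hwseg', hwfr'⟩ :=
        aux_frontier_cross hω0open hseg ⟨y, hyz, hω1sub0 hy⟩ ⟨z, hzz, hz⟩
      have hdw : dist y w ≤ dist y z := by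
        have := dist_add_dist_of_mem_segment hwseg
        have := dist_nonneg (x := w) (y := z); linarith
      have hdw' : dist y w' ≤ dist y z := by
        have := dist_add_dist_of_mem_segment hwseg'
        have := dist_nonneg (x := w') (y := z); linarith
      have hww' : dist w w' ≤ 2 * dist y z := by
        have := dist_triangle w y w'
        rw [dist_comm w y] at this
        linarith
      have hsd : setDist (frontier ω1) (frontier ω0) ≤ dist w w' := by
        apply csInf_le
        · exact ⟨0, fun x hx => by
            obtain ⟨a, -, b, -, rfl⟩ := hx
            exact dist_nonneg⟩
        · exact ⟨w, hwfr, w', hwfr', rfl⟩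
      have hmin : min (setDist (frontier ω1) (frontier ω0))
          (setDist (frontier ω0) (frontier ω)) ≤ setDist (frontier ω1) (frontier ω0) :=
        min_le_left _ _
      rw [hd]; linarith
    by_contra hzc
    have hdy : dist y (y + t • e) = |t| := by
      rw [dist_eq_norm]
      have : y - (y + t • e) = -(t • e) := by abel
      rw [this, norm_neg, norm_smul, he, EuclideanSpace.norm_single, norm_one,
        mul_one, Real.norm_eq_abs]
    have := hdle (y + t • e) hzc
    rw [dist_comm] at this
    rw [dist_comm, hdy] at this
    linarith
  -- Measure theory: bad sets are null.
  have hωm : MeasurableSet ω := hωopen.measurableSet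
  have hω1m : MeasurableSet ω1 := hω1open.measurableSet
  set N : Set (EuclideanSpace ℝ (Fin 2)) := {y | ¬ 0 ≤ stil y + η3 y} ∩ ω with hN
  have hNnull : volume N = 0 := by
    have := ae_iff.1 hcon
    rwa [Measure.restrict_apply' hωm] at this
  have hNp : volume ((fun y => y + h • e) ⁻¹' N) = 0 := by
    rw [measure_preimage_add_right volume (h • e) N]; exact hNnull
  have hNm : volume ((fun y => y - h • e) ⁻¹' N) = 0 := by
    have heq : (fun y : EuclideanSpace ℝ (Fin 2) => y - h • e)
        = (fun y => y + (-(h • e))) := by funext y; rw [sub_eq_add_neg]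
    rw [heq, measure_preimage_add_right volume (-(h • e)) N]; exact hNnull
  set M : Set (EuclideanSpace ℝ (Fin 2)) :=
    N ∪ ((fun y => y + h • e) ⁻¹' N) ∪ ((fun y => y - h • e) ⁻¹' N) with hM
  have hMnull : volume M = 0 :=
    measure_union_null (measure_union_null hNnull hNp) hNm
  have hae1 : ∀ᵐ y ∂(volume.restrict ω1), y ∉ M :=
    ae_restrict_of_ae (measure_eq_zero_iff_ae_notMem.1 hMnull)
  have hae2 : ∀ᵐ y ∂(volume.restrict ω1), y ∈ ω1 := ae_restrict_mem hω1m
  filter_upwards [hae1, hae2] with y hyM hy1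
  -- pointwise argument
  have hyM' : y ∉ N ∧ y + h • e ∉ N ∧ y - h • e ∉ N := by
    rw [hM] at hyM
    simp only [Set.mem_union, Set.mem_preimage, not_or] at hyM
    exact ⟨hyM.1.1, hyM.1.2, hyM.2⟩
  have hyω : y ∈ ω := hω0subω (hω1sub0 hy1)
  have hyp : y + h • e ∈ ω0 := hgeo y hy1 h (by rw [abs_of_pos hh0])
  have hym : y - h • e ∈ ω0 := by
    have := hgeo y hy1 (-h) (by rw [abs_neg, abs_of_pos hh0])
    rwa [neg_smul, ← sub_eq_add_neg] at this
  have hPy : 0 ≤ stil y + η3 y := by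
    by_contra hc; exact hyM'.1 ⟨hc, hyω⟩
  have hPp : 0 ≤ stil (y + h • e) + η3 (y + h • e) := by
    by_contra hc; exact hyM'.2.1 ⟨hc, hω0subω hyp⟩
  have hPm : 0 ≤ stil (y - h • e) + η3 (y - h • e) := by
    by_contra hc; exact hyM'.2.2 ⟨hc, hω0subω hym⟩
  -- concavity: `stil(y+he) + stil(y-he) ≤ 2 stil y`
  have hconc' : stil (y + h • e) + stil (y - h • e) ≤ 2 * stil y := by
    have hsegmem : ∀ t ∈ Set.Icc (-h) h, y + t • e ∈ ω0 := by
      intro t ht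
      exact hgeo y hy1 t (abs_le.2 ⟨ht.1, ht.2⟩)
    have hcc := hconc y (-h) h hsegmem
    have hmemn : -h ∈ Set.Icc (-h) h := by
      constructor <;> [exact le_refl _; linarith]
    have hmemp : h ∈ Set.Icc (-h) h := ⟨by linarith, le_refl _⟩
    have hkey := hcc.2 hmemn hmemp (by norm_num : (0:ℝ) ≤ 1/2)
      (by norm_num : (0:ℝ) ≤ 1/2) (by norm_num : (1/2 : ℝ) + 1/2 = 1)
    simp only [smul_eq_mul] at hkey
    have h0 : (1/2 : ℝ) * (-h) + (1/2) * h = 0 := by ring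
    rw [h0] at hkey
    simp only [zero_smul, add_zero] at hkey
    have hmn : y + (-h) • e = y - h • e := by rw [neg_smul, ← sub_eq_add_neg]
    rw [hmn] at hkey
    linarith
  -- final arithmetic
  have hh2 : (0:ℝ) < h ^ 2 := by positivity
  have hϱφ0 : 0 ≤ ϱ * φ1 y := mul_nonneg hϱ0.le (hφ0 y)
  have hϱφ : ϱ * φ1 y ≤ h ^ 2 / 2 := by
    have : ϱ * φ1 y ≤ ϱ * 1 := mul_le_mul_of_nonneg_left (hφ1 y) hϱ0.le
    linarith
  have hkey : stil y + (η3 y + ϱ * φ1 y *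
      ((η3 (y + h • e) - 2 * η3 y + η3 (y - h • e)) / h ^ 2))
      = (h ^ 2 * (stil y + η3 y) + ϱ * φ1 y *
        (η3 (y + h • e) - 2 * η3 y + η3 (y - h • e))) / h ^ 2 := by
    field_simp; ring
  rw [hkey]
  apply div_nonneg _ hh2.le
  nlinarith [mul_nonneg hϱφ0 hPp, mul_nonneg hϱφ0 hPm,
    mul_nonneg (by linarith : (0:ℝ) ≤ h ^ 2 - 2 * (ϱ * φ1 y)) hPy,
    mul_nonneg hϱφ0 (by linarith : (0:ℝ) ≤ 2 * stil y - stil (y + h • e) - stil (y - h • e))]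
end
end

section
/- Let ω be a bounded open subset of ℝ² and let s̃ be a real-valued function that is twice continuously differentiable on an open set containing closure(ω) and satisfies s̃(y) > 0 for every y ∈ closure(ω). Then for every y0 = (y0,1, y0,2) ∈ ω there exist a convex open neighbourhood U ⊂ ω of y0, a real number B, and real numbers B0 > 0 and r > 0 such that, setting g̃(y) := 1 − (1/2)·exp(r·(y1 − y0,1) + r·(y2 − y0,2)) for y = (y1, y2) ∈ ℝ², the following hold: (i) g̃(y) ≥ B0 for all y ∈ U; and (ii) for each ρ ∈ {1, 2}, the function (−s̃ + B)·g̃ is convex along every segment parallel to the coordinate direction e_ρ contained in U (i.e., (−s̃ + B)·g̃ is separately convex in each of the two variables on U). -/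
/-!
Take `B = 0`. On a closed ball `K ⊆ ω` around `y0`, `s̃ ≥ c > 0` and the first and second
derivatives of `s̃` are bounded by `N₁`, `N₂`. On a coordinate line `t ↦ y + t eᵨ` the exponent of
`g̃` is `a + r t`; writing `e = exp (a + r t)`,
`(-s̃ g̃)'' = -s̃'' (1 - e/2) + s̃' r e + s̃ r² e / 2 ≥ -N₂ - 2 N₁ r + c r² / 4` as long as
`1/2 ≤ e ≤ 2`. So first fix `r` large enough to make the right side nonnegative, and only then
shrink `U ⊆ K` until `1/2 < exp (r (y₁ - y0₁) + r (y₂ - y0₂)) < 3/2` on `U`, which also gives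
`g̃ ≥ 1/4` there.
-/

open Filter Metric Set Topology

theorem convexOn_of_hasDerivAt2_nonneg {D : Set ℝ} (hD : Convex ℝ D) {f f' f'' : ℝ → ℝ}
    (hf : ContinuousOn f D) (hf' : ∀ x ∈ interior D, HasDerivAt f (f' x) x)
    (hf'' : ∀ x ∈ interior D, HasDerivAt f' (f'' x) x)
    (hf''_nonneg : ∀ x ∈ interior D, 0 ≤ f'' x) : ConvexOn ℝ D f := by
  have hderiv : ∀ x ∈ interior D, deriv f =ᶠ[𝓝 x] f' := fun x hx =>
    eventually_of_mem (isOpen_interior.mem_nhds hx) fun y hy => (hf' y hy).deriv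
  refine convexOn_of_deriv2_nonneg hD hf
    (fun x hx => (hf' x hx).differentiableAt.differentiableWithinAt)
    (fun x hx => ((hderiv x hx).differentiableAt_iff.mpr
      (hf'' x hx).differentiableAt).differentiableWithinAt) fun x hx => ?_
  rw [Function.iterate_succ_apply, Function.iterate_one, (hderiv x hx).deriv_eq,
    (hf'' x hx).deriv]
  exact hf''_nonneg x hx

theorem exists_pos_add_two_mul_le_mul_sq {c : ℝ} (hc : 0 < c) (N₁ N₂ : ℝ) :
    ∃ r > 0, N₂ + 2 * N₁ * r ≤ c * r ^ 2 / 4 := by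
  set A := |N₂| + 2 * |N₁|
  refine ⟨1 + 4 * A / c, by positivity, ?_⟩
  set r := 1 + 4 * A / c
  have hr : 1 ≤ r := le_add_of_nonneg_right (by positivity)
  have hcr : c * r = c + 4 * A := by simp only [r]; field_simp
  calc N₂ + 2 * N₁ * r ≤ |N₂| + 2 * |N₁| * r := by
        gcongr
        · exact le_abs_self _
        · nlinarith [le_abs_self N₁]
    _ ≤ A * r := by nlinarith [abs_nonneg N₂]
    _ ≤ c * r ^ 2 / 4 := by nlinarith

theorem convexOn_neg_mul_one_sub_half_exp {D : Set ℝ} (hD : Convex ℝ D) {σ σ' σ'' : ℝ → ℝ}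
    {a c r N₁ N₂ : ℝ} (hσ : ContinuousOn σ D) (hσ' : ∀ t ∈ interior D, HasDerivAt σ (σ' t) t)
    (hσ'' : ∀ t ∈ interior D, HasDerivAt σ' (σ'' t) t) (hc : 0 ≤ c) (hr : 0 ≤ r)
    (hrN : N₂ + 2 * N₁ * r ≤ c * r ^ 2 / 4) (hσc : ∀ t ∈ interior D, c ≤ σ t)
    (hσN₁ : ∀ t ∈ interior D, |σ' t| ≤ N₁) (hσN₂ : ∀ t ∈ interior D, |σ'' t| ≤ N₂)
    (hexp : ∀ t ∈ interior D, 1 / 2 ≤ Real.exp (a + r * t) ∧ Real.exp (a + r * t) ≤ 2) :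
    ConvexOn ℝ D (fun t => -σ t * (1 - 1 / 2 * Real.exp (a + r * t))) := by
  set e := fun t => Real.exp (a + r * t)
  have he : ∀ t, HasDerivAt e (e t * r) t := fun t => by
    simpa using ((hasDerivAt_id t).const_mul r |>.const_add a).exp
  have hg : ∀ t, HasDerivAt (fun t => 1 - 1 / 2 * e t) (-(1 / 2 * (e t * r))) t := fun t =>
    ((he t).const_mul _).const_sub 1
  have hg' : ∀ t, HasDerivAt (fun t => -(1 / 2 * (e t * r))) (-(1 / 2 * (e t * r * r))) t :=
    fun t => (((he t).mul_const r).const_mul _).neg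
  refine convexOn_of_hasDerivAt2_nonneg hD (hσ.neg.mul (by fun_prop))
    (fun t ht => (hσ' t ht).neg.mul (hg t))
    (fun t ht => ((hσ'' t ht).neg.mul (hg t)).add ((hσ' t ht).neg.mul (hg' t))) fun t ht => ?_
  obtain ⟨he₁, he₂⟩ : 1 / 2 ≤ e t ∧ e t ≤ 2 := hexp t ht
  obtain ⟨hσ''₁, hσ''₂⟩ := abs_le.1 (hσN₂ t ht)
  obtain ⟨hσ'₁, hσ'₂⟩ := abs_le.1 (hσN₁ t ht)
  have h₁ : -N₂ ≤ -σ'' t * (1 - 1 / 2 * e t) := by nlinarith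
  have he₀ : 0 ≤ e t := by positivity
  have h₂ : -(2 * N₁ * r) ≤ σ' t * r * e t := by
    nlinarith [mul_le_mul_of_nonneg_right hσ'₁ (mul_nonneg hr he₀),
      mul_le_mul_of_nonneg_left he₂ (mul_nonneg (by linarith : 0 ≤ N₁) hr)]
  have h₃ : c * r ^ 2 / 4 ≤ σ t * r ^ 2 * e t / 2 := by
    nlinarith [mul_le_mul_of_nonneg_right (hσc t ht) (mul_nonneg (sq_nonneg r) he₀),
      mul_le_mul_of_nonneg_left he₁ (mul_nonneg hc (sq_nonneg r))]
  simp only [Pi.neg_apply]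
  linear_combination h₁ + h₂ + h₃ + hrN

section Line

variable {E F : Type*} [NormedAddCommGroup E] [NormedSpace ℝ E] [NormedAddCommGroup F]
  [NormedSpace ℝ F]

theorem DifferentiableAt.hasDerivAt_comp_add_smul {f : E → F} {y v : E} {t : ℝ}
    (hf : DifferentiableAt ℝ f (y + t • v)) :
    HasDerivAt (fun s : ℝ => f (y + s • v)) (fderiv ℝ f (y + t • v) v) t :=
  hf.hasFDerivAt.comp_hasDerivAt t (by simpa using ((hasDerivAt_id t).smul_const v).const_add y)

theorem DifferentiableAt.hasDerivAt_fderiv_comp_add_smul {f : E → F} {y v : E} {t : ℝ}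
    (hf : DifferentiableAt ℝ (fderiv ℝ f) (y + t • v)) :
    HasDerivAt (fun s : ℝ => fderiv ℝ f (y + s • v) v)
      (fderiv ℝ (fderiv ℝ f) (y + t • v) v v) t :=
  hf.hasDerivAt_comp_add_smul.clm_apply (hasDerivAt_const t v) |>.congr_deriv (by simp)

theorem ContDiffOn.exists_bound_fderiv_fderiv {f : E → F} {V K : Set E}
    (hf : ContDiffOn ℝ 2 f V) (hV : IsOpen V) (hK : IsCompact K) (hKV : K ⊆ V) :
    ∃ N₁ N₂ : ℝ, ∀ x ∈ K, ‖fderiv ℝ f x‖ ≤ N₁ ∧ ‖fderiv ℝ (fderiv ℝ f) x‖ ≤ N₂ := by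
  have hf' : ContDiffOn ℝ 1 (fderiv ℝ f) V := hf.fderiv_of_isOpen hV (by norm_num)
  obtain ⟨N₁, hN₁⟩ := hK.exists_bound_of_continuousOn (hf'.continuousOn.mono hKV)
  obtain ⟨N₂, hN₂⟩ := hK.exists_bound_of_continuousOn
    ((hf'.continuousOn_fderiv_of_isOpen hV le_rfl).mono hKV)
  exact ⟨N₁, N₂, fun x hx => ⟨hN₁ x hx, hN₂ x hx⟩⟩

theorem ContDiffOn.convexOn_neg_mul_one_sub_half_exp_comp_add_smul {f : E → ℝ} {V K : Set E}
    (hf : ContDiffOn ℝ 2 f V) (hV : IsOpen V) (hKV : K ⊆ V) {a c r N₁ N₂ : ℝ} (hc : 0 ≤ c)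
    (hfc : ∀ x ∈ K, c ≤ f x)
    (hN : ∀ x ∈ K, ‖fderiv ℝ f x‖ ≤ N₁ ∧ ‖fderiv ℝ (fderiv ℝ f) x‖ ≤ N₂) (hr : 0 ≤ r)
    (hrN : N₂ + 2 * N₁ * r ≤ c * r ^ 2 / 4) {y v : E} (hv : ‖v‖ ≤ 1) {D : Set ℝ}
    (hD : Convex ℝ D) (hDK : ∀ t ∈ D, y + t • v ∈ K)
    (hexp : ∀ t ∈ D, 1 / 2 ≤ Real.exp (a + r * t) ∧ Real.exp (a + r * t) ≤ 2) :
    ConvexOn ℝ D (fun t => -f (y + t • v) * (1 - 1 / 2 * Real.exp (a + r * t))) := by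
  have hdiff : ∀ t ∈ D, DifferentiableAt ℝ f (y + t • v) ∧
      DifferentiableAt ℝ (fderiv ℝ f) (y + t • v) := fun t ht => by
    have hfx := hf.contDiffAt (hV.mem_nhds (hKV (hDK t ht)))
    exact ⟨hfx.differentiableAt two_ne_zero,
      (hfx.fderiv_right (m := 1) le_rfl).differentiableAt one_ne_zero⟩
  refine convexOn_neg_mul_one_sub_half_exp hD
    (fun t ht => (hdiff t ht).1.hasDerivAt_comp_add_smul.continuousAt.continuousWithinAt)
    (fun t ht => (hdiff t (interior_subset ht)).1.hasDerivAt_comp_add_smul)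
    (fun t ht => (hdiff t (interior_subset ht)).2.hasDerivAt_fderiv_comp_add_smul) hc hr hrN
    (fun t ht => hfc _ (hDK t (interior_subset ht))) (fun t ht => ?_) (fun t ht => ?_)
    (fun t ht => hexp t (interior_subset ht))
  · simpa using (fderiv ℝ f _).le_of_opNorm_le_of_le (hN _ (hDK t (interior_subset ht))).1 hv
  · simpa using (fderiv ℝ (fderiv ℝ f) _ v).le_of_opNorm_le_of_le
      ((fderiv ℝ (fderiv ℝ f) _).le_of_opNorm_le_of_le (hN _ (hDK t (interior_subset ht))).2 hv) hv

end Line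

theorem add_smul_single_coord_sum (y y0 : EuclideanSpace ℝ (Fin 2)) (ρ : Fin 2) (r t : ℝ) :
    r * ((y + t • EuclideanSpace.single ρ (1 : ℝ)) 0 - y0 0) +
      r * ((y + t • EuclideanSpace.single ρ (1 : ℝ)) 1 - y0 1) =
    (r * (y 0 - y0 0) + r * (y 1 - y0 1)) + r * t := by
  fin_cases ρ <;> simp <;> ring

theorem stmt7_general (ω : Set (EuclideanSpace ℝ (Fin 2))) (hωopen : IsOpen ω)
    (stil : EuclideanSpace ℝ (Fin 2) → ℝ)
    (V : Set (EuclideanSpace ℝ (Fin 2))) (hVopen : IsOpen V) (hV : closure ω ⊆ V)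
    (hsC2 : ContDiffOn ℝ 2 stil V)
    (hspos : ∀ y ∈ closure ω, 0 < stil y) :
    ∀ y0 ∈ ω, ∃ (U : Set (EuclideanSpace ℝ (Fin 2))) (B B0 r : ℝ),
      IsOpen U ∧ Convex ℝ U ∧ y0 ∈ U ∧ U ⊆ ω ∧ 0 < B0 ∧ 0 < r ∧
      (∀ y ∈ U, B0 ≤ 1 - (1 / 2) * Real.exp (r * (y 0 - y0 0) + r * (y 1 - y0 1))) ∧
      (∀ ρ : Fin 2, ∀ (y : EuclideanSpace ℝ (Fin 2)) (t1 t2 : ℝ),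
        (∀ t ∈ Set.Icc t1 t2, y + t • EuclideanSpace.single ρ (1 : ℝ) ∈ U) →
        ConvexOn ℝ (Set.Icc t1 t2) (fun t =>
          (-stil (y + t • EuclideanSpace.single ρ (1 : ℝ)) + B) *
          (1 - (1 / 2) * Real.exp
            (r * ((y + t • EuclideanSpace.single ρ (1 : ℝ)) 0 - y0 0) +
             r * ((y + t • EuclideanSpace.single ρ (1 : ℝ)) 1 - y0 1))))) := by
  intro y0 hy0
  obtain ⟨ε, hε, hKω⟩ := nhds_basis_closedBall.mem_iff.1 (hωopen.mem_nhds hy0)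
  have hKV : closedBall y0 ε ⊆ V := hKω.trans (subset_closure.trans hV)
  obtain ⟨c, hc, hcs⟩ := (isCompact_closedBall y0 ε).exists_forall_le'
    (hsC2.continuousOn.mono hKV) fun x hx => hspos x (subset_closure (hKω hx))
  obtain ⟨N₁, N₂, hN⟩ := hsC2.exists_bound_fderiv_fderiv hVopen (isCompact_closedBall y0 ε) hKV
  obtain ⟨r, hr, hrN⟩ := exists_pos_add_two_mul_le_mul_sq hc N₁ N₂
  set φ : EuclideanSpace ℝ (Fin 2) → ℝ := fun x => r * (x 0 - y0 0) + r * (x 1 - y0 1)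
  obtain ⟨δ, hδ, hδU⟩ : ∃ δ > 0, ball y0 δ ⊆ ball y0 ε ∩ (Real.exp ∘ φ) ⁻¹' Ioo (1 / 2) (3 / 2) :=
    Metric.isOpen_iff.1 (isOpen_ball.inter (isOpen_Ioo.preimage (by fun_prop))) y0
      ⟨mem_ball_self hε, by norm_num [φ]⟩
  refine ⟨ball y0 δ, 0, 1 / 4, r, isOpen_ball, convex_ball y0 δ, mem_ball_self hδ,
    fun x hx => hKω (ball_subset_closedBall (hδU hx).1), by norm_num, hr,
    fun x hx => ?_, fun ρ y t₁ t₂ hseg => ?_⟩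
  · have hexp := (hδU hx).2.2
    simp only [Function.comp, φ] at hexp
    linarith
  · simp only [add_smul_single_coord_sum, add_zero]
    refine hsC2.convexOn_neg_mul_one_sub_half_exp_comp_add_smul hVopen hKV hc.le hcs hN hr.le hrN
      (by simp) (convex_Icc t₁ t₂) (fun t ht => ball_subset_closedBall (hδU (hseg t ht)).1)
      fun t ht => ?_
    have hexp := (hδU (hseg t ht)).2
    simp only [mem_preimage, Function.comp, φ, add_smul_single_coord_sum] at hexp
    exact ⟨hexp.1.le, by linarith [hexp.2]⟩

/-- **Convexification lemma (Lemma 7.2, following Frehse).** If `s̃` is `C²` on an open set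
containing `closure ω` and strictly positive on `closure ω`, then around every `y0 ∈ ω`
there are a convex open neighbourhood `U ⊆ ω`, constants `B ∈ ℝ`, `B0 > 0`, `r > 0` such
that, with `g̃(y) = 1 − (1/2)·exp(r(y₁ − y0,₁) + r(y₂ − y0,₂))`, one has `g̃ ≥ B0` on `U`
and `(−s̃ + B)·g̃` is convex along every segment parallel to a coordinate direction
contained in `U`. -/
theorem stmt7 (ω : Set (EuclideanSpace ℝ (Fin 2))) (hωopen : IsOpen ω)
    (hωbdd : Bornology.IsBounded ω)
    (stil : EuclideanSpace ℝ (Fin 2) → ℝ)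
    (V : Set (EuclideanSpace ℝ (Fin 2))) (hVopen : IsOpen V) (hV : closure ω ⊆ V)
    (hsC2 : ContDiffOn ℝ 2 stil V)
    (hspos : ∀ y ∈ closure ω, 0 < stil y) :
    ∀ y0 ∈ ω, ∃ (U : Set (EuclideanSpace ℝ (Fin 2))) (B B0 r : ℝ),
      IsOpen U ∧ Convex ℝ U ∧ y0 ∈ U ∧ U ⊆ ω ∧ 0 < B0 ∧ 0 < r ∧
      (∀ y ∈ U, B0 ≤ 1 - (1 / 2) * Real.exp (r * (y 0 - y0 0) + r * (y 1 - y0 1))) ∧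
      (∀ ρ : Fin 2, ∀ (y : EuclideanSpace ℝ (Fin 2)) (t1 t2 : ℝ),
        (∀ t ∈ Set.Icc t1 t2, y + t • EuclideanSpace.single ρ (1 : ℝ) ∈ U) →
        ConvexOn ℝ (Set.Icc t1 t2) (fun t =>
          (-stil (y + t • EuclideanSpace.single ρ (1 : ℝ)) + B) *
          (1 - (1 / 2) * Real.exp
            (r * ((y + t • EuclideanSpace.single ρ (1 : ℝ)) 0 - y0 0) +
             r * ((y + t • EuclideanSpace.single ρ (1 : ℝ)) 1 - y0 1))))) :=
  stmt7_general ω hωopen stil V hVopen hV hsC2 hspos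
end

section
/- Let ω be a bounded open subset of ℝ², let U1 and U be nonempty open subsets of ℝ² with closure(U1) ⊂ U and closure(U) ⊂ ω, and set d := (1/2)·min{dist(∂U1, ∂U), dist(∂U, ∂ω)} > 0. Fix ρ ∈ {1, 2}. Let s : ω → ℝ be continuous, let B ∈ ℝ, let B0 > 0, and let g̃ : ℝ² → ℝ be continuous with g̃(y) ≥ B0 for all y ∈ U, and assume that the function s̃ := (s − B)·g̃ is concave along every segment parallel to e_ρ contained in U (equivalently, (−s + B)·g̃ is convex along such segments). Let ζ3 ∈ L²(ω) satisfy s(y) + ζ3(y) ≥ 0 for almost every y ∈ ω, and let φ : ℝ² → ℝ be a C^∞ function with compact support contained in U1 and 0 ≤ φ ≤ 1. Then for every h with 0 < h < d and every ϱ with 0 < ϱ < h²/2, one has s(y) + ζ3(y) + ϱ·(φ(y))²·(g̃(y))^{−1}·δ_{ρh}((ζ3 + B)·g̃)(y) ≥ 0 for almost every y ∈ U1. -/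
set_option maxHeartbeats 1000000


open MeasureTheory Metric Set

noncomputable section

/-- Frontier crossing: a preconnected set meeting both `V` and its complement
meets the frontier of `V`. -/
theorem isPreconnected_inter_frontier_nonempty {X : Type*} [TopologicalSpace X]
    {s V : Set X} (hs : IsPreconnected s)
    (h1 : (s ∩ V).Nonempty) (h2 : (s \ V).Nonempty) : (s ∩ frontier V).Nonempty := by
  by_contra hc
  rw [Set.not_nonempty_iff_eq_empty] at hc
  have hdisj : ∀ x ∈ s, x ∉ frontier V := fun x hx hf =>
    (Set.eq_empty_iff_forall_notMem.mp hc x) ⟨hx, hf⟩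
  have hsub : s ⊆ interior V ∪ (closure V)ᶜ := by
    intro x hx
    rcases Classical.em (x ∈ closure V) with hcl | hcl
    · exact Or.inl (by_contra fun hi => hdisj x hx ⟨hcl, hi⟩)
    · exact Or.inr hcl
  have hne1 : (s ∩ interior V).Nonempty := by
    obtain ⟨x, hxs, hxV⟩ := h1
    exact ⟨x, hxs, by_contra fun hi => hdisj x hxs ⟨subset_closure hxV, hi⟩⟩
  have hne2 : (s ∩ (closure V)ᶜ).Nonempty := by
    obtain ⟨x, hxs, hxV⟩ := h2
    exact ⟨x, hxs, fun hcl =>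
      hxV (interior_subset (by_contra fun hi => hdisj x hxs ⟨hcl, hi⟩))⟩
  obtain ⟨x, _, hxi, hxc⟩ := hs (interior V) (closure V)ᶜ isOpen_interior
    isClosed_closure.isOpen_compl hsub hne1 hne2
  exact hxc (subset_closure (interior_subset hxi))

/-- **Admissibility of the perturbed test field (step (i) of the interior-regularity
theorem).** With `U1 ⊂⊂ U ⊂⊂ ω`, a weight `g̃ ≥ B0 > 0` on `U` such that `(s − B)·g̃` is
concave along segments parallel to `e_ρ` contained in `U`, and `ζ3 ∈ L²(ω)` satisfying
`s + ζ3 ≥ 0` a.e. in `ω`, the perturbation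
`ζ3 + ϱ·φ²·g̃⁻¹·δ_{ρh}((ζ3 + B)·g̃)` still satisfies the constraint a.e. in `U1`,
for `0 < h < d` and `0 < ϱ < h²/2`. -/
theorem stmt9 (ω U U1 : Set (EuclideanSpace ℝ (Fin 2)))
    (hωopen : IsOpen ω) (hUopen : IsOpen U) (hU1open : IsOpen U1)
    (hωbdd : Bornology.IsBounded ω) (hUne : U.Nonempty) (hU1ne : U1.Nonempty)
    (h1U : closure U1 ⊆ U) (hUω : closure U ⊆ ω)
    (d : ℝ)
    (hd : d = (1 / 2) * min (setDist (frontier U1) (frontier U))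
      (setDist (frontier U) (frontier ω)))
    (ρ : Fin 2)
    (s : EuclideanSpace ℝ (Fin 2) → ℝ) (hscont : ContinuousOn s ω)
    (B B0 : ℝ) (hB0 : 0 < B0)
    (gtil : EuclideanSpace ℝ (Fin 2) → ℝ) (hgcont : Continuous gtil)
    (hgB0 : ∀ y ∈ U, B0 ≤ gtil y)
    (hconc : ∀ (y : EuclideanSpace ℝ (Fin 2)) (t1 t2 : ℝ),
      (∀ t ∈ Set.Icc t1 t2, y + t • EuclideanSpace.single ρ (1 : ℝ) ∈ U) →
      ConcaveOn ℝ (Set.Icc t1 t2) (fun t =>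
        (s (y + t • EuclideanSpace.single ρ (1 : ℝ)) - B) *
        gtil (y + t • EuclideanSpace.single ρ (1 : ℝ))))
    (ζ3 : EuclideanSpace ℝ (Fin 2) → ℝ) (hζ3 : MemLp ζ3 2 (volume.restrict ω))
    (hcon : ∀ᵐ y ∂(volume.restrict ω), 0 ≤ s y + ζ3 y)
    (φ : EuclideanSpace ℝ (Fin 2) → ℝ) (hφsm : ContDiff ℝ (⊤ : ℕ∞) φ)
    (hφc : HasCompactSupport φ) (hφsupp : tsupport φ ⊆ U1)
    (hφ0 : ∀ y, 0 ≤ φ y) (hφ1 : ∀ y, φ y ≤ 1)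
    (h ϱ : ℝ) (hh0 : 0 < h) (hhd : h < d) (hϱ0 : 0 < ϱ) (hϱh : ϱ < h ^ 2 / 2) :
    ∀ᵐ y ∂(volume.restrict U1),
      0 ≤ s y + ζ3 y + ϱ * (φ y) ^ 2 * (gtil y)⁻¹ *
        (((ζ3 (y + h • EuclideanSpace.single ρ (1 : ℝ)) + B) *
            gtil (y + h • EuclideanSpace.single ρ (1 : ℝ)) -
          2 * ((ζ3 y + B) * gtil y) +
          (ζ3 (y - h • EuclideanSpace.single ρ (1 : ℝ)) + B) *
            gtil (y - h • EuclideanSpace.single ρ (1 : ℝ))) / h ^ 2) := by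
  classical
  set c : EuclideanSpace ℝ (Fin 2) := EuclideanSpace.single ρ (1 : ℝ) with hc
  -- key geometric fact: shifts of points of U1 by at most h stay in U
  have hmem : ∀ y ∈ U1, ∀ t : ℝ, |t| ≤ h → y + t • c ∈ U := by
    intro y hy t ht
    by_contra hnotin
    set z := y + t • c with hz
    have hseg : IsPreconnected (segment ℝ y z) := (convex_segment y z).isPreconnected
    have hyseg : y ∈ segment ℝ y z := left_mem_segment ℝ y z
    have hzseg : z ∈ segment ℝ y z := right_mem_segment ℝ y z
    obtain ⟨q, hqseg, hqf⟩ := isPreconnected_inter_frontier_nonempty hseg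
      ⟨y, hyseg, hy⟩ ⟨z, hzseg, fun hzU1 => hnotin (h1U (subset_closure hzU1))⟩
    obtain ⟨p, hpseg, hpf⟩ := isPreconnected_inter_frontier_nonempty hseg
      ⟨y, hyseg, h1U (subset_closure hy)⟩ ⟨z, hzseg, hnotin⟩
    rw [segment_eq_image] at hqseg hpseg
    obtain ⟨u, hu, hq⟩ := hqseg
    obtain ⟨v, hv, hp⟩ := hpseg
    have hq' : q = y + (u * t) • c := by
      rw [← hq]; show (1 - u) • y + u • (y + t • c) = y + (u * t) • c; module
    have hp' : p = y + (v * t) • c := by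
      rw [← hp]; show (1 - v) • y + v • (y + t • c) = y + (v * t) • c; module
    have hdqp : dist q p = |u * t - v * t| := by
      rw [hq', hp', dist_eq_norm]
      have : (y + (u * t) • c) - (y + (v * t) • c) = (u * t - v * t) • c := by
        rw [sub_smul]; abel
      rw [this, norm_smul, hc, EuclideanSpace.norm_single, norm_one, mul_one,
        Real.norm_eq_abs]
    have hdle : dist q p ≤ h := by
      rw [hdqp]
      have : |u * t - v * t| = |u - v| * |t| := by rw [← sub_mul, abs_mul]
      rw [this]
      have huv : |u - v| ≤ 1 := by
        rw [abs_le]; constructor <;> [linarith [hu.1, hv.2]; linarith [hu.2, hv.1]]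
      calc |u - v| * |t| ≤ 1 * |t| :=
            mul_le_mul_of_nonneg_right huv (abs_nonneg t)
        _ = |t| := one_mul _
        _ ≤ h := ht
    have hlb : BddBelow (Set.image2 dist (frontier U1) (frontier U)) := by
      refine ⟨0, fun x hx => ?_⟩
      obtain ⟨a, _, b, _, rfl⟩ := hx
      exact dist_nonneg
    have hsle : setDist (frontier U1) (frontier U) ≤ dist q p :=
      csInf_le hlb (Set.mem_image2_of_mem hqf hpf)
    have hmin : min (setDist (frontier U1) (frontier U))
        (setDist (frontier U) (frontier ω)) ≤ setDist (frontier U1) (frontier U) :=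
      min_le_left _ _
    rw [hd] at hhd
    linarith
  -- null sets from the constraint
  have hωm : MeasurableSet ω := hωopen.measurableSet
  set T : Set (EuclideanSpace ℝ (Fin 2)) := {y | ¬ 0 ≤ s y + ζ3 y} ∩ ω with hT
  have hTnull : volume T = 0 := by
    have h1 := ae_iff.mp hcon
    rwa [Measure.restrict_apply' hωm] at h1
  have hpnull : volume ((fun y => y + h • c) ⁻¹' T) = 0 := by
    rw [measure_preimage_add_right]; exact hTnull
  have hmnull : volume ((fun y => y + (-(h • c))) ⁻¹' T) = 0 := by
    rw [measure_preimage_add_right]; exact hTnull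
  have A0 : ∀ᵐ y ∂(volume.restrict U1), y ∉ T :=
    ae_restrict_of_ae (measure_eq_zero_iff_ae_notMem.mp hTnull)
  have A1 : ∀ᵐ y ∂(volume.restrict U1), y + h • c ∉ T :=
    ae_restrict_of_ae (measure_eq_zero_iff_ae_notMem.mp hpnull)
  have A2 : ∀ᵐ y ∂(volume.restrict U1), y - h • c ∉ T := by
    have := ae_restrict_of_ae (μ := volume) (s := U1)
      (measure_eq_zero_iff_ae_notMem.mp hmnull)
    filter_upwards [this] with y hy
    rwa [Set.mem_preimage, ← sub_eq_add_neg] at hy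
  filter_upwards [ae_restrict_mem hU1open.measurableSet, A0, A1, A2]
    with y hyU1 hn0 hnp hnm
  -- the three points lie in U (hence in ω)
  have hyU : y ∈ U := h1U (subset_closure hyU1)
  have hypU : y + h • c ∈ U := hmem y hyU1 h (le_of_eq (abs_of_pos hh0))
  have hymU : y - h • c ∈ U := by
    have := hmem y hyU1 (-h) (by rw [abs_neg, abs_of_pos hh0])
    rwa [neg_smul, ← sub_eq_add_neg] at this
  -- signs
  have hsy : 0 ≤ s y + ζ3 y := by
    by_contra hb; exact hn0 ⟨hb, hUω (subset_closure hyU)⟩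
  have hsp : 0 ≤ s (y + h • c) + ζ3 (y + h • c) := by
    by_contra hb; exact hnp ⟨hb, hUω (subset_closure hypU)⟩
  have hsm : 0 ≤ s (y - h • c) + ζ3 (y - h • c) := by
    by_contra hb; exact hnm ⟨hb, hUω (subset_closure hymU)⟩
  have hg0 : (0:ℝ) < gtil y := lt_of_lt_of_le hB0 (hgB0 y hyU)
  have hgp : (0:ℝ) < gtil (y + h • c) := lt_of_lt_of_le hB0 (hgB0 _ hypU)
  have hgm : (0:ℝ) < gtil (y - h • c) := lt_of_lt_of_le hB0 (hgB0 _ hymU)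
  -- concavity along the segment
  have hcc := hconc y (-h) h (fun t ht => hmem y hyU1 t (abs_le.mpr ⟨ht.1, ht.2⟩))
  have hmemm : (-h : ℝ) ∈ Set.Icc (-h) h := ⟨le_refl _, by linarith⟩
  have hmemp : (h : ℝ) ∈ Set.Icc (-h) h := ⟨by linarith, le_refl _⟩
  have hmid := hcc.2 hmemm hmemp (by norm_num : (0:ℝ) ≤ 1/2)
    (by norm_num : (0:ℝ) ≤ 1/2) (by norm_num)
  simp only [smul_eq_mul] at hmid
  rw [show (1/2:ℝ) * (-h) + (1/2) * h = 0 by ring] at hmid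
  rw [show y + (0:ℝ) • c = y by rw [zero_smul, add_zero]] at hmid
  rw [show y + (-h) • c = y - h • c by rw [neg_smul, ← sub_eq_add_neg]] at hmid
  have hkey : (s (y - h • c) - B) * gtil (y - h • c) +
      (s (y + h • c) - B) * gtil (y + h • c) ≤ 2 * ((s y - B) * gtil y) := by
    linarith
  -- lower bound for the second difference quotient numerator
  set N : ℝ := (ζ3 (y + h • c) + B) * gtil (y + h • c) -
      2 * ((ζ3 y + B) * gtil y) + (ζ3 (y - h • c) + B) * gtil (y - h • c) with hN
  have hid : N = (s (y + h • c) + ζ3 (y + h • c)) * gtil (y + h • c) +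
      (s (y - h • c) + ζ3 (y - h • c)) * gtil (y - h • c) -
      2 * ((s y + ζ3 y) * gtil y) -
      (((s (y - h • c) - B) * gtil (y - h • c) +
        (s (y + h • c) - B) * gtil (y + h • c)) - 2 * ((s y - B) * gtil y)) := by
    rw [hN]; ring
  have hNlb : -(2 * ((s y + ζ3 y) * gtil y)) ≤ N := by
    have hp1 : 0 ≤ (s (y + h • c) + ζ3 (y + h • c)) * gtil (y + h • c) :=
      mul_nonneg hsp hgp.le
    have hp2 : 0 ≤ (s (y - h • c) + ζ3 (y - h • c)) * gtil (y - h • c) :=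
      mul_nonneg hsm hgm.le
    linarith [hid]
  -- conclude
  have hh2 : (0:ℝ) < h ^ 2 := by positivity
  have hK : 0 ≤ ϱ * (φ y) ^ 2 * (gtil y)⁻¹ := by positivity
  have step1 : ϱ * (φ y) ^ 2 * (gtil y)⁻¹ * ((-(2 * ((s y + ζ3 y) * gtil y))) / h ^ 2)
      ≤ ϱ * (φ y) ^ 2 * (gtil y)⁻¹ * (N / h ^ 2) :=
    mul_le_mul_of_nonneg_left ((div_le_div_iff_of_pos_right hh2).mpr hNlb) hK
  have step2 : ϱ * (φ y) ^ 2 * (gtil y)⁻¹ * ((-(2 * ((s y + ζ3 y) * gtil y))) / h ^ 2)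
      = -(2 * ϱ * (φ y) ^ 2 * (s y + ζ3 y) / h ^ 2) := by
    field_simp
  have hφ2 : (φ y) ^ 2 ≤ 1 := by nlinarith [hφ0 y, hφ1 y]
  have hup : 2 * ϱ * (φ y) ^ 2 ≤ h ^ 2 := by
    nlinarith [mul_le_mul_of_nonneg_left hφ2 (by linarith : (0:ℝ) ≤ 2 * ϱ)]
  have step3 : 2 * ϱ * (φ y) ^ 2 * (s y + ζ3 y) / h ^ 2 ≤ s y + ζ3 y := by
    rw [div_le_iff₀ hh2, mul_comm]
    exact mul_le_mul_of_nonneg_left hup hsy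
  linarith [step1, step2.symm.le, step3]
end
end
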